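/- arXiv:2110.06761 — 6 statements merged into one kernel-verified Lean document; each statement's English description precedes it below -/
import Mathlib

section
/- Let S be a non-abelian finite simple group, let s ≥ 1, and let K = S^s. Then l^proj(K) > l(K), where l(K) denotes the least cardinality of a finite set on which K acts faithfully and transitively. -/
/-- A witness that a non-abelian simple group `S` admits a non-trivial projective
representation of size `m = |F|^n` over some finite field `F`. -/
structure ProjRepWitness (S : Type) [Group S] (m : ℕ) : Type 1 where
  F : Type
  [instF : Field F]
  [instFin : Fintype F]
  n : ℕ
  hn : 1 ≤ n
  card_eq : Fintype.card F ^ n = m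
  φ : S →* (Matrix.GeneralLinearGroup (Fin n) F ⧸
        Subgroup.center (Matrix.GeneralLinearGroup (Fin n) F))
  nontriv : φ ≠ 1

/-- `lproj S` is the smallest size of a non-trivial projective representation of `S`. -/
noncomputable def lproj (S : Type) [Group S] : ℕ :=
  sInf {m | Nonempty (ProjRepWitness S m)}

/-- `m` is the degree of a faithful transitive permutation representation of `K`. -/
def IsFaithfulTransitiveDegree (K : Type*) [Group K] (m : ℕ) : Prop :=
  ∃ (X : Type) (φ : K →* Equiv.Perm X), Finite X ∧ Nat.card X = m ∧
    Function.Injective φ ∧ ∀ x y : X, ∃ k : K, φ k x = y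

/-- `permDeg K` is the minimal degree of a faithful transitive permutation
representation of `K`. -/
noncomputable def permDeg (K : Type*) [Group K] : ℕ :=
  sInf {m | IsFaithfulTransitiveDegree K m}

/-!
The minimum `lproj S = |F|^n` is attained (the regular representation over `𝔽₂` is projectively
non-trivial because `S` is non-abelian), and the projective action of `PGL_n(F)` on `ℙ(Fⁿ)` is
faithful, so a minimal representation makes `S` act on `ℙ(Fⁿ)` with some point moved. As `S` is
simple, `S` acts faithfully and transitively on the orbit of that point, which has at most
`(|F|^n - 1)/(|F| - 1) < |F|^n` elements; the coordinatewise action of `S^s` on `s`-tuples of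
orbit points is then faithful and transitive of degree `< lproj(S)^s`.
-/

open MulAction Matrix
open scoped LinearAlgebra.Projectivization MatrixGroups

theorem IsSimpleGroup.faithfulSMul_orbit {G X : Type*} [Group G] [IsSimpleGroup G] [MulAction G X]
    {g : G} {x : X} (hgx : g • x ≠ x) : FaithfulSMul G (orbit G x) := by
  refine faithfulSMul_iff.2 fun k hk ↦ ?_
  rcases (toPermHom G (orbit G x)).normal_ker.eq_bot_or_eq_top with hker | hker
  · exact (Subgroup.mem_bot.1 (hker ▸ (MonoidHom.mem_ker.2 (Equiv.ext hk))))
  · have hg : g ∈ (toPermHom G (orbit G x)).ker := hker ▸ Subgroup.mem_top g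
    exact absurd (congrArg Subtype.val (DFunLike.congr_fun hg ⟨x, mem_orbit_self x⟩) :) hgx

instance Pi.faithfulSMul' {ι : Type*} {G X : ι → Type*} [∀ i, SMul (G i) (X i)]
    [∀ i, Nonempty (X i)] [∀ i, FaithfulSMul (G i) (X i)] :
    FaithfulSMul (∀ i, G i) (∀ i, X i) := by
  classical
  refine ⟨fun h ↦ funext fun i ↦ eq_of_smul_eq_smul (α := X i) fun y ↦ ?_⟩
  simpa using congrFun (h (Function.update (fun j ↦ Classical.arbitrary (X j)) i y)) i

instance Pi.isPretransitive' {ι : Type*} {G X : ι → Type*} [∀ i, SMul (G i) (X i)]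
    [∀ i, IsPretransitive (G i) (X i)] : IsPretransitive (∀ i, G i) (∀ i, X i) :=
  ⟨fun x y ↦ ⟨fun i ↦ (exists_smul_eq (G i) (x i) (y i)).choose,
    funext fun i ↦ (exists_smul_eq (G i) (x i) (y i)).choose_spec⟩⟩

theorem IsFaithfulTransitiveDegree.of_mulAction {G X : Type} [Group G] [MulAction G X] [Finite X]
    [FaithfulSMul G X] [IsPretransitive G X] : IsFaithfulTransitiveDegree G (Nat.card X) :=
  ⟨X, toPermHom G X, inferInstance, rfl, toPerm_injective, exists_smul_eq G⟩

theorem Projectivization.card_lt_card {k V : Type*} [DivisionRing k] [AddCommGroup V]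
    [Module k V] [Finite k] [Finite V] : Nat.card (ℙ k V) < Nat.card V := by
  have hk : 0 < Nat.card k - 1 := Nat.sub_pos_of_lt Finite.one_lt_card
  rw [Projectivization.card' k V]
  exact Nat.lt_succ_of_le (Nat.le_mul_of_pos_right _ hk)

instance Projectivization.faithfulSMul_projGenLinGroup {ι K : Type*} [Fintype ι] [DecidableEq ι]
    [Field K] : FaithfulSMul PGL(ι, K) (ℙ K (ι → K)) := by
  refine faithfulSMul_iff.2 fun g hg ↦ ?_
  induction g using ProjGenLinGroup.induction_on with | mk A =>
  obtain ⟨a, ha⟩ :=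
      (toLin' (A : Matrix ι ι K)).exists_eq_smul_id_of_forall_notLinearIndependent fun v ↦ by
    by_cases hv : v = 0
    · simp [hv, linearIndependent_fin2]
    · simpa [LinearIndependent.pair_iff' hv, Projectivization.mk_eq_mk_iff'] using!
        hg (.mk K v hv)
  have hA : (A : Matrix ι ι K) = scalar ι a := by
    rw [← LinearMap.toMatrix'_toLin' (A : Matrix ι ι K), ha]
    exact LinearMap.toMatrix'_algebraMap a
  exact ProjGenLinGroup.mk_eq_one.2
    (GeneralLinearGroup.mem_center_iff_val_mem_range_scalar.2 ⟨a, hA.symm⟩)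

section Regular
variable (G : Type*) [Group G] [Fintype G] (R : Type*) [CommRing R]

noncomputable def regularGL : G →* GL (Fin (Fintype.card G)) R :=
  (permMatrixHom.toHomUnits.comp (Fintype.equivFin G).permCongrHom.toMonoidHom).comp
    (toPermHom G G)

theorem regularGL_injective [Nontrivial R] : Function.Injective (regularGL G R) := by
  intro g h hgh
  have hperm := PEquiv.toMatrix_injective (congrArg Units.val hgh)
  exact toPerm_injective <| (Fintype.equivFin G).permCongrHom.injective <| inv_injective <|
    Equiv.ext fun i ↦ Option.some_injective _ (congrArg (· i) hperm)

end Regular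

theorem Matrix.ProjGenLinGroup.mk_comp_ne_one_of_injective {G n R : Type*} [Group G] [Fintype n]
    [DecidableEq n] [CommRing R] {f : G →* GL n R} (hf : Function.Injective f)
    (hG : ¬ ∀ x y : G, x * y = y * x) : ProjGenLinGroup.mk.comp f ≠ 1 := by
  refine fun h ↦ hG fun x y ↦ hf ?_
  have hx : f x ∈ Subgroup.center (GL n R) :=
    ProjGenLinGroup.mk_eq_one.1 (DFunLike.congr_fun h x)
  rw [map_mul, map_mul, Subgroup.mem_center_iff.1 hx]

theorem nonempty_projRepWitness_two_pow_card (S : Type) [Group S] [Fintype S]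
    (hS : ¬ ∀ x y : S, x * y = y * x) : Nonempty (ProjRepWitness S (2 ^ Fintype.card S)) :=
  ⟨{ F := ZMod 2
     n := Fintype.card S
     hn := Fintype.card_pos
     card_eq := by rw [ZMod.card]
     φ := ProjGenLinGroup.mk.comp (regularGL S (ZMod 2))
     nontriv := ProjGenLinGroup.mk_comp_ne_one_of_injective (regularGL_injective S _) hS }⟩

theorem nonempty_projRepWitness_lproj (S : Type) [Group S] [Fintype S]
    (hS : ¬ ∀ x y : S, x * y = y * x) : Nonempty (ProjRepWitness S (lproj S)) :=
  Nat.sInf_mem (s := {m | Nonempty (ProjRepWitness S m)})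
    ⟨_, nonempty_projRepWitness_two_pow_card S hS⟩

namespace ProjRepWitness

attribute [instance] instF instFin

variable {S : Type} [Group S] {m : ℕ} (W : ProjRepWitness S m)

abbrev Space : Type := ℙ W.F (Fin W.n → W.F)

/-- `W.φ` with its codomain read as Mathlib's `PGL`, which acts on projective space. -/
def toPGL : S →* PGL(W.n, W.F) := W.φ

noncomputable instance : MulAction S W.Space := MulAction.compHom _ W.toPGL

theorem card_space_lt : Nat.card W.Space < m := by
  calc Nat.card W.Space < Nat.card (Fin W.n → W.F) := Projectivization.card_lt_card
    _ = m := by rw [Nat.card_fun, Nat.card_eq_fintype_card, Nat.card_fin, W.card_eq]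

theorem exists_smul_ne : ∃ (g : S) (x : W.Space), g • x ≠ x := by
  by_contra! h
  refine W.nontriv (MonoidHom.ext fun g ↦ ?_)
  exact (faithfulSMul_iff.1 inferInstance) (W.toPGL g) (h g)

end ProjRepWitness

theorem statement1 (S : Type) [Group S] [Fintype S] (hS : IsSimpleGroup S)
    (hna : ¬ ∀ x y : S, x * y = y * x) (s : ℕ) (hs : 1 ≤ s) :
    permDeg (Fin s → S) < lproj S ^ s := by
  obtain ⟨W⟩ := nonempty_projRepWitness_lproj S hna
  obtain ⟨g, x, hgx⟩ := W.exists_smul_ne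
  have := IsSimpleGroup.faithfulSMul_orbit hgx
  have : Nonempty (orbit S x) := ⟨⟨x, mem_orbit_self x⟩⟩
  calc permDeg (Fin s → S) ≤ Nat.card (Fin s → orbit S x) :=
        Nat.sInf_le IsFaithfulTransitiveDegree.of_mulAction
    _ = Nat.card (orbit S x) ^ s := by rw [Nat.card_fun, Nat.card_fin]
    _ < lproj S ^ s :=
        Nat.pow_lt_pow_left ((Finite.card_subtype_le _).trans_lt W.card_space_lt) (by omega)
end

section
/- Let T be a finite monolithic group whose unique minimal normal subgroup K is non-abelian and isomorphic to S^r for a non-abelian finite simple group S and some r ≥ 1. Let Aut₁(T) denote the group of automorphisms f of T which induce the identity on T/K, i.e. f(t)·t⁻¹ ∈ K for all t ∈ T. Then |Aut₁(T)| ≤ r·|Aut(S)|^r. -/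
/-!
The centralizer of the non-abelian monolith `K` is trivial, so an automorphism in `Aut₁(T)` is
determined by its restriction `α` to `K ≅ S ^ r`. As `S` is non-abelian simple, every nontrivial
normal subgroup of `S ^ r` contains a coordinate factor, so `α` permutes the factors by some `π`,
and `α` is determined by `π` together with the `r` isomorphisms it induces between factors, which
are elements of `Aut(S)`. Since `f` induces the identity on `T / K`, `π` commutes with the action
of `T` on the factors by conjugation. This action is transitive by minimality of `K`, so `π` is
determined by the image of a single factor, which leaves at most `r` choices for `π`.
-/

open Subgroup
open scoped commutatorElement

lemma IsSimpleGroup.center_eq_bot {S : Type*} [Group S] [IsSimpleGroup S]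
    (hS : ¬ ∀ x y : S, x * y = y * x) : center S = ⊥ :=
  (IsSimpleGroup.eq_bot_or_eq_top_of_normal _ inferInstance).resolve_right fun h =>
    hS fun x y => mem_center_iff.1 (h ▸ mem_top y) x

lemma Subgroup.centralizer_eq_bot_of_monolith {T : Type*} [Group T] {K : Subgroup T} [K.Normal]
    (hmin : ∀ N : Subgroup T, N.Normal → N ≠ ⊥ → K ≤ N) (hK : ¬ ∀ x y : K, x * y = y * x) :
    centralizer (K : Set T) = ⊥ := by
  by_contra h
  exact hK fun x y => Subtype.ext (mem_centralizer_iff.1 (hmin _ inferInstance h y.2) x x.2)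

lemma Equiv.Perm.eq_of_commute_of_apply_eq {G ι : Type*} (ρ : G → Equiv.Perm ι) {i : ι}
    (hρ : ∀ j, ∃ g, ρ g i = j) {σ τ : Equiv.Perm ι} (hσ : ∀ g, Commute σ (ρ g))
    (hτ : ∀ g, Commute τ (ρ g)) (h : σ i = τ i) : σ = τ := by
  ext j
  obtain ⟨g, rfl⟩ := hρ j
  rw [← Equiv.Perm.mul_apply, (hσ g).eq, Equiv.Perm.mul_apply, h, ← Equiv.Perm.mul_apply,
    ← (hτ g).eq, Equiv.Perm.mul_apply]

namespace PiFactor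

variable {ι S : Type*} [Group S] [DecidableEq ι]

variable (S) in
def factor (i : ι) : Subgroup (ι → S) := (MonoidHom.mulSingle (fun _ => S) i).range

lemma mulSingle_mem_factor (i : ι) (s : S) : Pi.mulSingle i s ∈ factor S i := ⟨s, rfl⟩

lemma mulSingle_apply_eq_of_mem_factor {i : ι} {g : ι → S} (hg : g ∈ factor S i) :
    Pi.mulSingle i (g i) = g := by
  obtain ⟨s, rfl⟩ := hg
  simp

lemma apply_eq_one_of_mem_factor {i j : ι} (hji : j ≠ i) {g : ι → S} (hg : g ∈ factor S i) :
    g j = 1 := by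
  rw [← mulSingle_apply_eq_of_mem_factor hg, Pi.mulSingle_eq_of_ne hji]

lemma conj_mulSingle (c : ι → S) (i : ι) (s : S) :
    c * Pi.mulSingle i s * c⁻¹ = Pi.mulSingle i (c i * s * (c i)⁻¹) := by
  funext j
  rcases eq_or_ne j i with rfl | hji
  · simp
  · simp [Pi.mulSingle_eq_of_ne hji]

instance factor_normal (i : ι) : (factor S i).Normal :=
  ⟨by rintro _ ⟨s, rfl⟩ c; exact conj_mulSingle c i s ▸ mulSingle_mem_factor i _⟩

lemma eq_of_factor_le [Nontrivial S] {i j : ι} (h : factor S i ≤ factor S j) : i = j := by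
  obtain ⟨s, hs⟩ := exists_ne (1 : S)
  by_contra hij
  simpa [hs] using apply_eq_one_of_mem_factor hij (h (mulSingle_mem_factor i s))

lemma factor_ne_bot [Nontrivial S] (i : ι) : factor S i ≠ ⊥ := by
  obtain ⟨s, hs⟩ := exists_ne (1 : S)
  intro h
  have h1 := mulSingle_mem_factor i s
  rw [h, mem_bot] at h1
  simpa [hs] using congrFun h1 i

section Simple

variable [IsSimpleGroup S]

lemma exists_factor_le (hZ : center S = ⊥) {N : Subgroup (ι → S)} [hN : N.Normal]
    (hN' : N ≠ ⊥) : ∃ i, factor S i ≤ N := by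
  obtain ⟨n, hnN, hn⟩ := N.bot_or_exists_ne_one.resolve_left hN'
  obtain ⟨i, hi⟩ : ∃ i, n i ≠ 1 := by
    by_contra! h
    exact hn (funext h)
  obtain ⟨s, hs⟩ : ∃ s, ⁅s, n i⁆ ≠ 1 := by
    by_contra! h
    refine hi (mem_bot.1 (hZ ▸ mem_center_iff.2 fun s => ?_))
    exact commutatorElement_eq_one_iff_mul_comm.1 (h s)
  -- the commutator of `n` with `Pi.mulSingle i s` lies in `N` and in the `i`-th factor
  have hc : Pi.mulSingle i ⁅s, n i⁆ ∈ N := by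
    convert N.mul_mem (hN.conj_mem n hnN (Pi.mulSingle i s)) (N.inv_mem hnN) using 1
    funext j
    rcases eq_or_ne j i with rfl | hji
    · simp [commutatorElement_def]
    · simp [Pi.mulSingle_eq_of_ne hji]
  have htop : N.comap (MonoidHom.mulSingle _ i) = ⊤ :=
    (IsSimpleGroup.eq_bot_or_eq_top_of_normal _ (hN.comap _)).resolve_left
      fun h => hs (mem_bot.1 (h ▸ hc))
  refine ⟨i, ?_⟩
  rintro _ ⟨s, rfl⟩
  exact mem_comap.1 (htop ▸ mem_top s)

lemma eq_factor_of_le (hZ : center S = ⊥) {N : Subgroup (ι → S)} [N.Normal] (hN : N ≠ ⊥)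
    {i : ι} (hle : N ≤ factor S i) : N = factor S i := by
  obtain ⟨j, hj⟩ := exists_factor_le hZ hN
  exact le_antisymm hle (eq_of_factor_le (hj.trans hle) ▸ hj)

lemma exists_map_factor_eq (hZ : center S = ⊥) (α : MulAut (ι → S)) (i : ι) :
    ∃ j, (factor S i).map α.toMonoidHom = factor S j := by
  have : ((factor S i).map α.toMonoidHom).Normal := (factor_normal i).map _ α.surjective
  obtain ⟨j, hj⟩ := exists_factor_le hZ (N := (factor S i).map α.toMonoidHom) fun h =>
    factor_ne_bot i ((map_eq_bot_iff_of_injective _ α.injective).1 h)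
  refine ⟨j, ?_⟩
  have hle : (factor S j).comap α.toMonoidHom ≤ factor S i :=
    (comap_mono hj).trans_eq (comap_map_eq_self_of_injective α.injective _)
  have hne : (factor S j).comap α.toMonoidHom ≠ ⊥ := fun h => factor_ne_bot j <| by
    rw [← map_comap_eq_self_of_surjective (f := α.toMonoidHom) α.surjective (factor S j), h,
      Subgroup.map_bot]
  rw [← eq_factor_of_le hZ hne hle, map_comap_eq_self_of_surjective α.surjective]

noncomputable def factorIdx (hZ : center S = ⊥) (α : MulAut (ι → S)) (i : ι) : ι :=
  (exists_map_factor_eq hZ α i).choose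

lemma map_factor (hZ : center S = ⊥) (α : MulAut (ι → S)) (i : ι) :
    (factor S i).map α.toMonoidHom = factor S (factorIdx hZ α i) :=
  (exists_map_factor_eq hZ α i).choose_spec

lemma factorIdx_eq (hZ : center S = ⊥) {α : MulAut (ι → S)} {i j : ι}
    (h : (factor S i).map α.toMonoidHom = factor S j) : factorIdx hZ α i = j :=
  eq_of_factor_le ((map_factor hZ α i).symm.trans h).le

lemma factorIdx_mul (hZ : center S = ⊥) (α β : MulAut (ι → S)) (i : ι) :
    factorIdx hZ (α * β) i = factorIdx hZ α (factorIdx hZ β i) := by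
  refine factorIdx_eq hZ ?_
  rw [← map_factor hZ α, ← map_factor hZ β, map_map]
  rfl

lemma factorIdx_one (hZ : center S = ⊥) (i : ι) : factorIdx hZ 1 i = i :=
  factorIdx_eq hZ (map_id _)

noncomputable def factorPerm (hZ : center S = ⊥) : MulAut (ι → S) →* Equiv.Perm ι where
  toFun α :=
    { toFun := factorIdx hZ α
      invFun := factorIdx hZ α⁻¹
      left_inv i := by rw [← factorIdx_mul, inv_mul_cancel, factorIdx_one]
      right_inv i := by rw [← factorIdx_mul, mul_inv_cancel, factorIdx_one] }
  map_one' := Equiv.ext (factorIdx_one hZ)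
  map_mul' α β := Equiv.ext (factorIdx_mul hZ α β)

lemma map_factor_factorPerm (hZ : center S = ⊥) (α : MulAut (ι → S)) (i : ι) :
    (factor S i).map α.toMonoidHom = factor S (factorPerm hZ α i) :=
  map_factor hZ α i

lemma factorPerm_conj (hZ : center S = ⊥) (c : ι → S) : factorPerm hZ (MulAut.conj c) = 1 :=
  Equiv.ext fun i => factorIdx_eq hZ (Normal.map_conj_eq (H := factor S i) c)

lemma mulSingle_apply_factorPerm (hZ : center S = ⊥) (α : MulAut (ι → S)) (i : ι) (s : S) :
    Pi.mulSingle (factorPerm hZ α i) (α (Pi.mulSingle i s) (factorPerm hZ α i)) =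
      α (Pi.mulSingle i s) :=
  mulSingle_apply_eq_of_mem_factor
    (map_factor_factorPerm hZ α i ▸ mem_map_of_mem _ (mulSingle_mem_factor i s))

noncomputable def factorAut (hZ : center S = ⊥) (α : MulAut (ι → S)) (i : ι) : MulAut S where
  toFun s := α (Pi.mulSingle i s) (factorPerm hZ α i)
  invFun s := α⁻¹ (Pi.mulSingle (factorPerm hZ α i) s) i
  left_inv s := by
    simp only [mulSingle_apply_factorPerm, MulAut.inv_apply_self, Pi.mulSingle_eq_same]
  right_inv s := by
    have h := mulSingle_apply_factorPerm hZ α⁻¹ (factorPerm hZ α i) s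
    rw [map_inv, Equiv.Perm.inv_def, Equiv.symm_apply_apply] at h
    dsimp only
    rw [h, MulAut.apply_inv_self, Pi.mulSingle_eq_same]
  map_mul' s t := by simp [Pi.mulSingle_mul]

lemma apply_mulSingle (hZ : center S = ⊥) (α : MulAut (ι → S)) (i : ι) (s : S) :
    α (Pi.mulSingle i s) = Pi.mulSingle (factorPerm hZ α i) (factorAut hZ α i s) :=
  (mulSingle_apply_factorPerm hZ α i s).symm

lemma eq_of_factorPerm_eq_of_factorAut_eq [Finite ι] (hZ : center S = ⊥)
    {α β : MulAut (ι → S)} (hperm : factorPerm hZ α = factorPerm hZ β)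
    (haut : factorAut hZ α = factorAut hZ β) : α = β :=
  MulEquiv.toMonoidHom_injective <| MonoidHom.pi_ext fun i s => by
    simp only [MulEquiv.coe_toMonoidHom, apply_mulSingle hZ, hperm, haut]

end Simple

end PiFactor

namespace Monolithic

open PiFactor

variable {T : Type*} [Group T] {K : Subgroup T}

lemma map_eq_of_forall_mul_inv_mem {f : MulAut T} (hf : ∀ t, f t * t⁻¹ ∈ K) :
    K.map f.toMonoidHom = K := by
  refine le_antisymm ?_ fun x hx => ⟨f⁻¹ x, ?_, MulAut.apply_inv_self _ f x⟩
  · rintro _ ⟨x, hx, rfl⟩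
    simpa using K.mul_mem (hf x) hx
  · have h := hf (f⁻¹ x)
    rw [MulAut.apply_inv_self] at h
    simpa using K.mul_mem (K.inv_mem h) hx

def restrictAut (f : MulAut T) (hf : K.map f.toMonoidHom = K) : MulAut K :=
  (f.subgroupMap K).trans (MulEquiv.subgroupCongr hf)

@[simp]
lemma coe_restrictAut_apply (f : MulAut T) (hf : K.map f.toMonoidHom = K) (x : K) :
    (restrictAut f hf x : T) = f x :=
  rfl

variable [K.Normal]

lemma eq_one_of_forall_mem_apply_eq (hK : centralizer (K : Set T) = ⊥) {f : MulAut T}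
    (hf : ∀ x ∈ K, f x = x) : f = 1 := by
  ext t
  -- conjugation by `t` and by `f t` agree on `K`
  have hc : t⁻¹ * f t ∈ centralizer (K : Set T) := mem_centralizer_iff.2 fun x hx => by
    have h := hf _ (‹K.Normal›.conj_mem x hx t)
    rw [map_mul, map_mul, map_inv, hf x hx] at h
    calc x * (t⁻¹ * f t) = t⁻¹ * (t * x * t⁻¹) * f t := by group
      _ = t⁻¹ * (f t * x * (f t)⁻¹) * f t := by rw [h]
      _ = t⁻¹ * f t * x := by group
  rw [hK, mem_bot, inv_mul_eq_one] at hc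
  exact hc.symm

lemma restrictAut_injective (hK : centralizer (K : Set T) = ⊥) {f g : MulAut T}
    (hf : K.map f.toMonoidHom = K) (hg : K.map g.toMonoidHom = K)
    (h : restrictAut f hf = restrictAut g hg) : f = g := by
  have : g⁻¹ * f = 1 := eq_one_of_forall_mem_apply_eq hK fun x hx => by
    have hx' := congrArg Subtype.val (DFunLike.congr_fun h ⟨x, hx⟩)
    simp only [coe_restrictAut_apply] at hx'
    rw [MulAut.mul_apply, hx', MulAut.inv_apply_self]
  exact (inv_mul_eq_one.1 this).symm

lemma restrictAut_mul_conjNormal (f : MulAut T) (hf : K.map f.toMonoidHom = K) (t : T) :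
    restrictAut f hf * MulAut.conjNormal t = MulAut.conjNormal (f t) * restrictAut f hf :=
  MulEquiv.ext fun x => Subtype.ext <| by simp [MulAut.mul_apply]

variable {ι S : Type*} [Group S] [DecidableEq ι] [IsSimpleGroup S]

noncomputable def factorAction (hZ : center S = ⊥) (e : K ≃* (ι → S)) : T →* Equiv.Perm ι :=
  (factorPerm hZ).comp ((MulAut.congr e).toMonoidHom.comp MulAut.conjNormal)

lemma factorAction_eq_one (hZ : center S = ⊥) (e : K ≃* (ι → S)) {k : T} (hk : k ∈ K) :
    factorAction hZ e k = 1 := by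
  have h : MulAut.congr e (MulAut.conjNormal k) = MulAut.conj (e ⟨k, hk⟩) := by
    ext g : 1
    obtain ⟨x, rfl⟩ := e.surjective g
    rw [show MulAut.congr e (MulAut.conjNormal k) (e x) = e (MulAut.conjNormal k x) by simp,
      MulAut.conj_apply, ← map_inv, ← map_mul, ← map_mul]
    exact congrArg e (Subtype.ext (by simp))
  simp [factorAction, h, factorPerm_conj]

lemma conjNormal_mem_factor (hZ : center S = ⊥) (e : K ≃* (ι → S)) (t : T) {x : K} {i : ι}
    (hx : e x ∈ factor S i) : e (MulAut.conjNormal t x) ∈ factor S (factorAction hZ e t i) := by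
  rw [factorAction, MonoidHom.comp_apply, ← map_factor_factorPerm]
  exact ⟨e x, hx, by simp⟩

lemma exists_factorAction_apply_eq (hZ : center S = ⊥) (e : K ≃* (ι → S))
    (hmin : ∀ N : Subgroup T, N.Normal → N ≠ ⊥ → K ≤ N) (i j : ι) :
    ∃ t, factorAction hZ e t i = j := by
  by_contra! h
  obtain ⟨s, hs⟩ := exists_ne (1 : S)
  -- otherwise the normal closure of the `i`-th factor, which contains `K`, lies in the kernel of
  -- the `j`-th coordinate
  let A : Set T := (fun g => (e.symm g : T)) '' factor S i
  let B : Subgroup T := ((Pi.evalMonoidHom (fun _ => S) j).comp e.toMonoidHom).ker.map K.subtype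
  have hAB : normalClosure A ≤ B := (closure_le _).2 fun x hx => by
    obtain ⟨_, ⟨g, hg, rfl⟩, hconj⟩ := Group.mem_conjugatesOfSet_iff.1 hx
    obtain ⟨c, rfl⟩ := isConj_iff.1 hconj
    refine ⟨MulAut.conjNormal c (e.symm g), ?_, by simp⟩
    exact apply_eq_one_of_mem_factor (h c).symm
      (conjNormal_mem_factor hZ e c (by simpa using hg))
  have hA : normalClosure A ≠ ⊥ := fun hbot =>
    hs (by simpa using normalClosure_eq_bot_iff.1 hbot ⟨_, mulSingle_mem_factor i s, rfl⟩)
  obtain ⟨y, hy, hyx⟩ := hAB (hmin _ normalClosure_normal hA (e.symm (Pi.mulSingle j s)).2)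
  rw [Subtype.val_injective hyx] at hy
  simp [hs] at hy

lemma factorPerm_restrictAut_commute (hZ : center S = ⊥) (e : K ≃* (ι → S)) {f : MulAut T}
    (hf : ∀ t, f t * t⁻¹ ∈ K) (t : T) :
    Commute (factorPerm hZ (MulAut.congr e (restrictAut f (map_eq_of_forall_mul_inv_mem hf))))
      (factorAction hZ e t) := by
  have h : factorPerm hZ (MulAut.congr e (restrictAut f (map_eq_of_forall_mul_inv_mem hf))) *
      factorAction hZ e t = factorAction hZ e (f t) *
        factorPerm hZ (MulAut.congr e (restrictAut f (map_eq_of_forall_mul_inv_mem hf))) := by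
    simp only [factorAction, MonoidHom.comp_apply, MulEquiv.coe_toMonoidHom, ← map_mul,
      restrictAut_mul_conjNormal]
  rwa [← inv_mul_cancel_right (f t) t, map_mul, factorAction_eq_one hZ e (hf t), one_mul] at h

end Monolithic

open PiFactor Monolithic

theorem statement2_general (T : Type*) [Group T] (S : Type*) [Group S] [Fintype S]
    (hS : IsSimpleGroup S) (hSna : ¬ ∀ x y : S, x * y = y * x)
    (K : Subgroup T) [K.Normal]
    (hmin : ∀ N : Subgroup T, N.Normal → N ≠ ⊥ → K ≤ N)
    (hKna : ¬ ∀ x y : ↥K, x * y = y * x)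
    (r : ℕ) (hr : 1 ≤ r) (e : ↥K ≃* (Fin r → S)) :
    Nat.card {f : MulAut T // ∀ t : T, f t * t⁻¹ ∈ K} ≤ r * Nat.card (MulAut S) ^ r := by
  have hZ := hS.center_eq_bot hSna
  have hK := centralizer_eq_bot_of_monolith hmin hKna
  let i₀ : Fin r := ⟨0, hr⟩
  let α (f : {f : MulAut T // ∀ t : T, f t * t⁻¹ ∈ K}) : MulAut (Fin r → S) :=
    MulAut.congr e (restrictAut f.1 (map_eq_of_forall_mul_inv_mem f.2))
  have hinj : Function.Injective fun f => (factorPerm hZ (α f) i₀, factorAut hZ (α f)) := by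
    intro f g hfg
    obtain ⟨hi₀, haut⟩ := Prod.mk.inj hfg
    have hperm := Equiv.Perm.eq_of_commute_of_apply_eq (factorAction hZ e)
      (exists_factorAction_apply_eq hZ e hmin i₀) (factorPerm_restrictAut_commute hZ e f.2)
      (factorPerm_restrictAut_commute hZ e g.2) hi₀
    exact Subtype.ext <| restrictAut_injective hK _ _ <| (MulAut.congr e).injective <|
      eq_of_factorPerm_eq_of_factorAut_eq hZ hperm haut
  simpa [Nat.card_prod, Nat.card_pi] using Nat.card_le_card_of_injective _ hinj

theorem statement2 (T : Type*) [Group T] [Fintype T] (S : Type*) [Group S] [Fintype S]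
    (hS : IsSimpleGroup S) (hSna : ¬ ∀ x y : S, x * y = y * x)
    (K : Subgroup T) [K.Normal] (hKbot : K ≠ ⊥)
    (hmin : ∀ N : Subgroup T, N.Normal → N ≠ ⊥ → K ≤ N)
    (hKna : ¬ ∀ x y : ↥K, x * y = y * x)
    (r : ℕ) (hr : 1 ≤ r) (e : ↥K ≃* (Fin r → S)) :
    Nat.card {f : MulAut T // ∀ t : T, f t * t⁻¹ ∈ K} ≤ r * Nat.card (MulAut S) ^ r :=
  statement2_general T S hS hSna K hmin hKna r hr e
end

section
/- Let T be a finite group possessing a unique minimal normal subgroup, and suppose this minimal normal subgroup is non-abelian. Then every faithful finite-dimensional representation V of T over a finite field F has a composition factor on which T acts faithfully; in particular, a faithful representation of T over F of smallest possible dimension is irreducible. -/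
/-!
Suppose no composition factor of a faithful representation `V` of `T` is faithful. The kernel of
the action on each factor is then a nontrivial normal subgroup, so it contains `K`: every element
of `K` acts trivially on all factors of a composition series, i.e. unipotently on `V`. In
characteristic `p` a unipotent element has `p`-power order, so `K` is a `p`-group. Its centre is
then nontrivial and characteristic in `K`, hence normal in `T`, hence contains `K`: `K` is abelian.

A faithful factor `U₂ ⧸ U₁` of a faithful representation of least dimension has dimension at
least `dim V`, which forces `U₁ = 0` and `U₂ = V`, so `V` itself is irreducible.
-/

open Module

theorem exists_pow_prime_pow_eq_one_of_isNilpotent_sub_one {R : Type*} [Ring R] (p : ℕ)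
    [Fact p.Prime] [CharP R p] {a : R} (ha : IsNilpotent (a - 1)) : ∃ n : ℕ, a ^ p ^ n = 1 := by
  obtain ⟨n, hn⟩ := ha
  refine ⟨n, ?_⟩
  have : (a - 1) ^ p ^ n = 0 :=
    pow_eq_zero_of_le (Nat.lt_pow_self (Fact.out : p.Prime).one_lt).le hn
  rwa [sub_pow_char_pow_of_commute p n (Commute.one_right a), one_pow, sub_eq_zero] at this

theorem IsPGroup.of_injective_of_isNilpotent_sub_one {G R : Type*} [Group G] [Ring R] (p : ℕ)
    [Fact p.Prime] [CharP R p] (f : G →* R) (hf : Function.Injective f)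
    (hnil : ∀ g, IsNilpotent (f g - 1)) : IsPGroup p G := fun g => by
  obtain ⟨n, hn⟩ := exists_pow_prime_pow_eq_one_of_isNilpotent_sub_one p (hnil g)
  exact ⟨n, hf (by rw [map_pow, hn, map_one])⟩

theorem IsPGroup.commute_of_le_all_nontrivial_normal {G : Type*} [Group G] {K : Subgroup G}
    [K.Normal] [Finite K] {p : ℕ} [Fact p.Prime] (hp : IsPGroup p K) (hK : K ≠ ⊥)
    (hmin : ∀ N : Subgroup G, N.Normal → N ≠ ⊥ → K ≤ N) (x y : K) : x * y = y * x := by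
  have : Nontrivial K := (Subgroup.nontrivial_iff_ne_bot K).mpr hK
  have hZ : (Subgroup.center K).map K.subtype ≠ ⊥ :=
    (Subgroup.map_eq_bot_iff_of_injective _ K.subtype_injective).not.mpr
      ((Subgroup.nontrivial_iff_ne_bot _).mp hp.center_nontrivial)
  -- `inferInstance`: the centre of `K` is characteristic in `K`, hence normal in `G`
  obtain ⟨z, hz, hzx⟩ := hmin _ inferInstance hZ x.2
  obtain rfl : z = x := Subtype.ext hzx
  exact (Subgroup.mem_center_iff.mp hz y).symm

theorem Submodule.eq_bot_and_eq_top_of_finrank_le_finrank_subquotient {F V : Type*}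
    [DivisionRing F] [AddCommGroup V] [Module F V] [FiniteDimensional F V]
    {U₁ U₂ : Submodule F V} (h : U₁ ≤ U₂)
    (hrank : finrank F V ≤ finrank F (U₂ ⧸ U₁.comap U₂.subtype)) : U₁ = ⊥ ∧ U₂ = ⊤ := by
  have hquot := Submodule.finrank_quotient_add_finrank (U₁.comap U₂.subtype)
  have hcomap := (Submodule.comapSubtypeEquivOfLe h).finrank_eq
  have hU₂ := U₂.finrank_le
  exact ⟨Submodule.finrank_eq_zero.mp (by omega), Submodule.eq_top_of_finrank_eq (by omega)⟩

namespace Representation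

section CommRing

variable {k G V : Type*} [CommRing k] [Group G] [AddCommGroup V] [Module k V]
  (ρ : Representation k G V)

lemma mem_invtSubmodule_iff_forall_mem {U : Submodule k V} :
    U ∈ ρ.invtSubmodule ↔ ∀ g, ∀ v ∈ U, ρ g v ∈ U := by
  simp only [mem_invtSubmodule, Module.End.mem_invtSubmodule_iff_forall_mem_of_mem]

lemma invtSubmodule_covBy_iff {U₁ U₂ : ρ.invtSubmodule} :
    U₁ ⋖ U₂ ↔ (U₁ : Submodule k V) < U₂ ∧
      ∀ U ∈ ρ.invtSubmodule, U₁ ≤ U → U ≤ U₂ → U = U₁ ∨ U = U₂ := by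
  rw [covBy_iff_lt_and_eq_or_eq, Subtype.forall]
  simp only [Subtype.ext_iff]
  rfl

def subquotient {U₁ U₂ : Submodule k V} (h₁ : U₁ ∈ ρ.invtSubmodule) (h₂ : U₂ ∈ ρ.invtSubmodule) :
    Representation k G (U₂ ⧸ U₁.comap U₂.subtype) :=
  (ρ.subrepresentation U₂ (ρ.mem_invtSubmodule.mp h₂)).quotient _
    fun g _ hv => ρ.mem_invtSubmodule.mp h₁ g hv

lemma subquotient_apply_mk {U₁ U₂ : Submodule k V} (h₁ : U₁ ∈ ρ.invtSubmodule)
    (h₂ : U₂ ∈ ρ.invtSubmodule) (g : G) (v : U₂) :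
    ρ.subquotient h₁ h₂ g (Submodule.Quotient.mk v) =
      Submodule.Quotient.mk ⟨ρ g v, ρ.mem_invtSubmodule.mp h₂ g v.2⟩ :=
  rfl

lemma subquotient_eq_one_iff {U₁ U₂ : Submodule k V} (h₁ : U₁ ∈ ρ.invtSubmodule)
    (h₂ : U₂ ∈ ρ.invtSubmodule) {g : G} :
    ρ.subquotient h₁ h₂ g = 1 ↔ ∀ v ∈ U₂, ρ g v - v ∈ U₁ := by
  constructor
  · intro h v hv
    have := congrArg (fun f => f (Submodule.Quotient.mk ⟨v, hv⟩)) h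
    simpa [subquotient_apply_mk, Submodule.Quotient.eq] using this
  · intro h
    ext ⟨v, hv⟩
    simpa [subquotient_apply_mk, Submodule.Quotient.eq] using h v hv

theorem isNilpotent_sub_one_of_le_ker_subquotient [IsArtinian k V] [IsNoetherian k V]
    {N : Subgroup G}
    (hN : ∀ U₁ U₂ : ρ.invtSubmodule, U₁ ⋖ U₂ → N ≤ (ρ.subquotient U₁.2 U₂.2).ker)
    {g : G} (hg : g ∈ N) : IsNilpotent (ρ g - 1) := by
  suffices ∀ W : ρ.invtSubmodule, ∃ m : ℕ, ∀ g ∈ N, ∀ v ∈ (W : Submodule k V),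
      ((ρ g - 1) ^ m) v = 0 by
    obtain ⟨m, hm⟩ := this ⊤
    exact ⟨m, LinearMap.ext fun v => hm g hg v Submodule.mem_top⟩
  intro W
  induction W using WellFoundedLT.induction with
  | _ W ih =>
  rcases eq_or_ne W ⊥ with rfl | hW
  · refine ⟨0, fun g _ v hv => ?_⟩
    simpa using hv
  obtain ⟨U, -, hUW⟩ := exists_le_covBy_of_lt (bot_lt_iff_ne_bot.mpr hW)
  obtain ⟨m, hm⟩ := ih U hUW.lt
  refine ⟨m + 1, fun g hg v hv => ?_⟩
  have hgv : ρ g v - v ∈ (U : Submodule k V) :=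
    (ρ.subquotient_eq_one_iff U.2 W.2).mp (hN U W hUW hg) v hv
  simpa [pow_succ] using hm g hg _ hgv

end CommRing

theorem exists_covBy_ker_subquotient_eq_bot {F T V : Type*} [Field F] [Finite F] [Group T]
    [Finite T] [AddCommGroup V] [Module F V] [FiniteDimensional F V] (ρ : Representation F T V)
    (hρ : Function.Injective ρ) {K : Subgroup T} [K.Normal] (hK : K ≠ ⊥)
    (hmin : ∀ N : Subgroup T, N.Normal → N ≠ ⊥ → K ≤ N) (hKna : ¬ ∀ x y : K, x * y = y * x) :
    ∃ U₁ U₂ : ρ.invtSubmodule, U₁ ⋖ U₂ ∧ (ρ.subquotient U₁.2 U₂.2).ker = ⊥ := by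
  by_contra! hfaithful
  have hKker : ∀ U₁ U₂ : ρ.invtSubmodule, U₁ ⋖ U₂ → K ≤ (ρ.subquotient U₁.2 U₂.2).ker :=
    fun U₁ U₂ hcov => hmin _ inferInstance (hfaithful U₁ U₂ hcov)
  have : Fact (ringChar F).Prime := ⟨CharP.char_is_prime F _⟩
  have : Nontrivial K := (Subgroup.nontrivial_iff_ne_bot K).mpr hK
  have hρK : Function.Injective (ρ.comp K.subtype) := hρ.comp K.subtype_injective
  have : Nontrivial (Module.End F V) := hρK.nontrivial
  have : CharP (Module.End F V) (ringChar F) :=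
    charP_of_injective_algebraMap (algebraMap F _).injective _
  have hKp : IsPGroup (ringChar F) K := .of_injective_of_isNilpotent_sub_one _ _ hρK
    fun g => ρ.isNilpotent_sub_one_of_le_ker_subquotient hKker g.2
  exact hKna (hKp.commute_of_le_all_nontrivial_normal hK hmin)

end Representation

open Representation

theorem statement5 (T : Type*) [Group T] [Finite T] (K : Subgroup T) [K.Normal]
    (hKbot : K ≠ ⊥)
    (hmin : ∀ N : Subgroup T, N.Normal → N ≠ ⊥ → K ≤ N)
    (hKna : ¬ ∀ x y : ↥K, x * y = y * x)
    (F : Type*) [Field F] [Fintype F] :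
    (∀ (V : Type) [AddCommGroup V] [Module F V] (_ : FiniteDimensional F V)
        (ρ : T →* (V →ₗ[F] V)ˣ), Function.Injective ρ →
      ∃ U₁ U₂ : Submodule F V,
        (∀ t : T, ∀ v ∈ U₁, ((ρ t : V →ₗ[F] V)) v ∈ U₁) ∧
        (∀ t : T, ∀ v ∈ U₂, ((ρ t : V →ₗ[F] V)) v ∈ U₂) ∧
        U₁ < U₂ ∧
        (∀ U : Submodule F V, (∀ t : T, ∀ v ∈ U, ((ρ t : V →ₗ[F] V)) v ∈ U) →
          U₁ ≤ U → U ≤ U₂ → U = U₁ ∨ U = U₂) ∧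
        (∀ t : T, (∀ v ∈ U₂, ((ρ t : V →ₗ[F] V)) v - v ∈ U₁) → t = 1)) ∧
    (∀ (V : Type) [AddCommGroup V] [Module F V] (_ : FiniteDimensional F V)
        (ρ : T →* (V →ₗ[F] V)ˣ), Function.Injective ρ →
      (∀ (W : Type) [AddCommGroup W] [Module F W] (_ : FiniteDimensional F W)
          (σ : T →* (W →ₗ[F] W)ˣ), Function.Injective σ →
        Module.finrank F V ≤ Module.finrank F W) →
      ∀ X : Submodule F V, (∀ t : T, ∀ v ∈ X, ((ρ t : V →ₗ[F] V)) v ∈ X) →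
        X = ⊥ ∨ X = ⊤) := by
  have faithful_factor (V : Type) [AddCommGroup V] [Module F V] [FiniteDimensional F V]
      (ρ : T →* (V →ₗ[F] V)ˣ) (hρ : Function.Injective ρ) :=
    exists_covBy_ker_subquotient_eq_bot ((Units.coeHom _).comp ρ)
      (Units.val_injective.comp hρ) hKbot hmin hKna
  refine ⟨fun V _ _ _ ρ hρ => ?_, fun V _ _ _ ρ hρ hdim X hX => ?_⟩
  · obtain ⟨U₁, U₂, hcov, hker⟩ := faithful_factor V ρ hρ
    obtain ⟨hlt, hbetween⟩ := (invtSubmodule_covBy_iff _).mp hcov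
    refine ⟨U₁, U₂, (mem_invtSubmodule_iff_forall_mem _).mp U₁.2,
      (mem_invtSubmodule_iff_forall_mem _).mp U₂.2, hlt,
      fun U hU => hbetween U ((mem_invtSubmodule_iff_forall_mem _).mpr hU), fun t ht => ?_⟩
    rwa [← Subgroup.mem_bot, ← hker, MonoidHom.mem_ker, subquotient_eq_one_iff]
  · obtain ⟨U₁, U₂, hcov, hker⟩ := faithful_factor V ρ hρ
    have hσ := (MonoidHom.ker_eq_bot_iff _).mp hker
    obtain ⟨hU₁, hU₂⟩ := Submodule.eq_bot_and_eq_top_of_finrank_le_finrank_subquotient hcov.le <|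
      hdim _ inferInstance (MonoidHom.toHomUnits _) fun s t hst => hσ (congrArg Units.val hst)
    obtain ⟨-, hbetween⟩ := (invtSubmodule_covBy_iff _).mp hcov
    rw [← hU₁, ← hU₂]
    exact hbetween X ((mem_invtSubmodule_iff_forall_mem _).mpr hX) (hU₁ ▸ bot_le) (hU₂ ▸ le_top)
end

section
/- Let (n_i)_{i∈ℕ} be a strictly increasing sequence of pairwise coprime integers with n_i ≥ 12 for all i, and let q_i = p_i^{k_i} be prime powers with pairwise distinct primes p_i ≥ 5 such that gcd(n_i, q_i − 1) > 1 for all i. Set m_i = q_i^{⌊n_i^{3/2}⌋}. Then the profinite group G = ∏_{i∈ℕ} SL_{n_i}(𝔽_{q_i})^{m_i} (each finite factor discrete, G with the product topology) does not have UBERG. -/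
/-- Continuity of a map into a discrete space: preimages of points are open. -/
def ContinuousToDiscrete {G : Type*} [TopologicalSpace G] {H : Type*} (f : G → H) : Prop :=
  ∀ h : H, IsOpen (f ⁻¹' {h})

/-- `ρ` is a continuous irreducible `n`-dimensional representation of `G` over `F`. -/
def IrredRep (G : Type*) [Group G] [TopologicalSpace G] (F : Type*) [Field F] (n : ℕ)
    (ρ : G →* Matrix.GeneralLinearGroup (Fin n) F) : Prop :=
  ContinuousToDiscrete ρ ∧
  ∀ W : Submodule F (Fin n → F),
    (∀ g : G, ∀ v ∈ W, Matrix.mulVec ((ρ g : Matrix (Fin n) (Fin n) F)) v ∈ W) →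
      W = ⊥ ∨ W = ⊤

/-- Two representations are equivalent if they are conjugate in `GL_n(F)`. -/
def RepEquiv {G : Type*} [Group G] {F : Type*} [Field F] {n : ℕ}
    (ρ₁ ρ₂ : G →* Matrix.GeneralLinearGroup (Fin n) F) : Prop :=
  ∃ x : Matrix.GeneralLinearGroup (Fin n) F, ∀ g : G, x * ρ₁ g * x⁻¹ = ρ₂ g

/-- A topological group has UBERG (uniformly bounded exponential representation growth)
if there is `c > 0` such that for every finite field `F` and `n ≥ 1` the continuous
irreducible `n`-dimensional `F`-representations of `G` fall into at most `|F|^(c*n)`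
equivalence classes. -/
def HasUBERG (G : Type*) [Group G] [TopologicalSpace G] : Prop :=
  ∃ c : ℕ, 0 < c ∧ ∀ (F : Type) [Field F] [Fintype F] (n : ℕ), 1 ≤ n →
    ∃ R : Finset (G →* Matrix.GeneralLinearGroup (Fin n) F),
      (∀ ρ ∈ R, IrredRep G F n ρ) ∧
      R.card ≤ Fintype.card F ^ (c * n) ∧
      ∀ ρ : G →* Matrix.GeneralLinearGroup (Fin n) F,
        IrredRep G F n ρ → ∃ ρ' ∈ R, RepEquiv ρ' ρ

/-- A topological group is topologically finitely generated if some finite subset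
generates a dense subgroup. -/
def TopFG (G : Type*) [Group G] [TopologicalSpace G] : Prop :=
  ∃ S : Finset G, Dense ((Subgroup.closure (S : Set G) : Subgroup G) : Set G)

/-- Finite special linear groups are given the discrete topology. -/
instance SLdiscreteTopology (m : Type*) [DecidableEq m] [Fintype m]
    (R : Type*) [CommRing R] : TopologicalSpace (Matrix.SpecialLinearGroup m R) := ⊥

instance SLdiscrete (m : Type*) [DecidableEq m] [Fintype m]
    (R : Type*) [CommRing R] : DiscreteTopology (Matrix.SpecialLinearGroup m R) :=
  ⟨rfl⟩

/-! The `m_i` coordinate projections `G → SL_{n_i}(𝔽_{q_i})`, composed with the standard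
representation, are continuous irreducible representations of dimension `n_i` over `𝔽_{q_i}`
(transvections move any nonzero vector onto the coordinate axes), and they are pairwise
inequivalent because an element supported on one coordinate acts trivially in all the others.
So UBERG with constant `c` would force `q_i ^ ⌊n_i^{3/2}⌋ ≤ q_i ^ (c n_i)`, which fails as soon
as `n_i ≥ (c + 1)²`, and such `i` exist because `n` is strictly increasing. -/

namespace Matrix.SpecialLinearGroup

variable {ι F : Type*} [Fintype ι] [DecidableEq ι] [Field F]

lemma transvection_mulVec_sub {i j : ι} (hij : i ≠ j) (b : F) (w : ι → F) :
    (transvection hij b : Matrix ι ι F) *ᵥ w - w = (b * w j) • Pi.single i 1 := by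
  simp [transvection_coe, add_mulVec, single_mulVec_eq]

lemma single_mem_of_forall_mulVec_mem {W : Submodule F (ι → F)}
    (hW : ∀ A : SpecialLinearGroup ι F, ∀ v ∈ W, (A : Matrix ι ι F) *ᵥ v ∈ W)
    {w : ι → F} (hw : w ∈ W) {i j : ι} (hij : i ≠ j) (hwj : w j ≠ 0) :
    Pi.single i 1 ∈ W := by
  have := W.sub_mem (hW (transvection hij (w j)⁻¹) w hw) hw
  rwa [transvection_mulVec_sub, inv_mul_cancel₀ hwj, one_smul] at this

theorem eq_bot_or_eq_top_of_forall_mulVec_mem [Nontrivial ι] {W : Submodule F (ι → F)}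
    (hW : ∀ A : SpecialLinearGroup ι F, ∀ v ∈ W, (A : Matrix ι ι F) *ᵥ v ∈ W) :
    W = ⊥ ∨ W = ⊤ := by
  refine or_iff_not_imp_left.2 fun hW0 => ?_
  obtain ⟨v, hvW, hv⟩ := W.exists_mem_ne_zero_of_ne_bot hW0
  obtain ⟨j, hj⟩ := Function.ne_iff.1 hv
  have hsingle_ne : ∀ i, i ≠ j → Pi.single i 1 ∈ W := fun i hij =>
    single_mem_of_forall_mulVec_mem hW hvW hij hj
  have hsingle : ∀ i, Pi.single i (1 : F) ∈ W := by
    intro i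
    rcases eq_or_ne i j with rfl | hij
    · obtain ⟨i', hi'⟩ := exists_ne i
      exact single_mem_of_forall_mulVec_mem hW (hsingle_ne i' hi') hi'.symm (by simp)
    · exact hsingle_ne i hij
  rw [eq_top_iff, ← (Pi.basisFun F ι).span_eq, Submodule.span_le]
  rintro _ ⟨i, rfl⟩
  simpa using hsingle i

lemma exists_ne_one [Nontrivial ι] : ∃ s : SpecialLinearGroup ι F, s ≠ 1 := by
  obtain ⟨i, j, hij⟩ := exists_pair_ne ι
  refine ⟨transvection hij 1, fun h => one_ne_zero (α := F) ?_⟩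
  exact (transvection_mem_center_iff hij 1).1 (h ▸ Subgroup.one_mem _)

end Matrix.SpecialLinearGroup

section Representation

variable {G H F : Type*} [Group G] [Group H] [Field F] {n : ℕ}

lemma RepEquiv.symm {ρ₁ ρ₂ : G →* GL (Fin n) F} (h : RepEquiv ρ₁ ρ₂) : RepEquiv ρ₂ ρ₁ := by
  obtain ⟨x, hx⟩ := h
  exact ⟨x⁻¹, fun g => by rw [← hx g]; group⟩

lemma RepEquiv.trans {ρ₁ ρ₂ ρ₃ : G →* GL (Fin n) F} (h₁₂ : RepEquiv ρ₁ ρ₂)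
    (h₂₃ : RepEquiv ρ₂ ρ₃) : RepEquiv ρ₁ ρ₃ := by
  obtain ⟨x, hx⟩ := h₁₂
  obtain ⟨y, hy⟩ := h₂₃
  exact ⟨y * x, fun g => by rw [← hy g, ← hx g]; group⟩

lemma RepEquiv.of_comp {ρ₁ ρ₂ : H →* GL (Fin n) F} {φ : G →* H} (hφ : Function.Surjective φ)
    (h : RepEquiv (ρ₁.comp φ) (ρ₂.comp φ)) : RepEquiv ρ₁ ρ₂ := by
  obtain ⟨x, hx⟩ := h
  refine ⟨x, fun h => ?_⟩
  obtain ⟨g, rfl⟩ := hφ h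
  exact hx g

lemma not_repEquiv_of_map_eq_one {ρ₁ ρ₂ : G →* GL (Fin n) F} (g : G) (h₁ : ρ₁ g ≠ 1)
    (h₂ : ρ₂ g = 1) : ¬ RepEquiv ρ₁ ρ₂ := by
  rintro ⟨x, hx⟩
  have := hx g
  rw [h₂, mul_inv_eq_one, mul_eq_left] at this
  exact h₁ this

lemma IrredRep.comp [TopologicalSpace G] [TopologicalSpace H] {ρ : H →* GL (Fin n) F}
    (hρ : IrredRep H F n ρ) {φ : G →* H} (hφc : Continuous φ) (hφs : Function.Surjective φ) :
    IrredRep G F n (ρ.comp φ) := by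
  refine ⟨fun h => (hρ.1 h).preimage hφc, fun W hW => hρ.2 W fun h => ?_⟩
  obtain ⟨g, rfl⟩ := hφs h
  exact hW g

theorem HasUBERG.exists_card_le [TopologicalSpace G] (hG : HasUBERG G) :
    ∃ c : ℕ, ∀ (F : Type) [Field F] [Fintype F] (n : ℕ), 1 ≤ n →
      ∀ {ι : Type*} [Fintype ι] (ρ : ι → G →* GL (Fin n) F), (∀ j, IrredRep G F n (ρ j)) →
        Pairwise (fun j j' => ¬ RepEquiv (ρ j) (ρ j')) →
          Fintype.card ι ≤ Fintype.card F ^ (c * n) := by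
  obtain ⟨c, -, hc⟩ := hG
  refine ⟨c, fun F _ _ n hn ι _ ρ hirr hinequiv => ?_⟩
  obtain ⟨R, -, hRcard, hRcover⟩ := hc F n hn
  choose r hrR hr using fun j => hRcover (ρ j) (hirr j)
  have hinj : Function.Injective fun j => (⟨r j, hrR j⟩ : R) := fun j j' h => by
    by_contra hne
    have hrr : r j = r j' := congrArg Subtype.val h
    exact hinequiv hne ((hr j).symm.trans (hrr ▸ hr j'))
  calc Fintype.card ι ≤ Fintype.card R := Fintype.card_le_of_injective _ hinj
    _ = R.card := Fintype.card_coe R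
    _ ≤ _ := hRcard

end Representation

section FactorRep

variable {F : Type*} [Field F] {n : ℕ} (J : Type*)

def slFactorRep (j : J) : (J → Matrix.SpecialLinearGroup (Fin n) F) →* GL (Fin n) F :=
  Matrix.SpecialLinearGroup.toGL.comp (Pi.evalMonoidHom _ j)

variable [DecidableEq J]

lemma irredRep_slFactorRep [Nontrivial (Fin n)] (j : J) :
    IrredRep (J → Matrix.SpecialLinearGroup (Fin n) F) F n (slFactorRep J j) := by
  refine ⟨fun h => ?_, fun W hW => ?_⟩
  · have hj : Continuous fun g : J → Matrix.SpecialLinearGroup (Fin n) F => g j :=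
      continuous_apply j
    exact hj.isOpen_preimage (Matrix.SpecialLinearGroup.toGL ⁻¹' {h}) (isOpen_discrete _)
  refine Matrix.SpecialLinearGroup.eq_bot_or_eq_top_of_forall_mulVec_mem fun A v hv => ?_
  simpa [slFactorRep] using hW (Pi.mulSingle j A) v hv

lemma not_repEquiv_slFactorRep [Nontrivial (Fin n)] {j j' : J} (hjj' : j ≠ j') :
    ¬ RepEquiv (slFactorRep (F := F) (n := n) J j) (slFactorRep J j') := by
  obtain ⟨s, hs⟩ := Matrix.SpecialLinearGroup.exists_ne_one (ι := Fin n) (F := F)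
  refine not_repEquiv_of_map_eq_one (Pi.mulSingle j s) ?_ ?_
  · simpa [slFactorRep] using (map_ne_one_iff _ Matrix.SpecialLinearGroup.toGL_injective).2 hs
  · simp [slFactorRep, Pi.mulSingle_eq_of_ne' hjj']

end FactorRep

lemma mul_lt_sqrt_pow_three {c N : ℕ} (hN : (c + 1) ^ 2 ≤ N) : c * N < Nat.sqrt (N ^ 3) := by
  have hN0 : 0 < N := lt_of_lt_of_le (by positivity) hN
  calc c * N < (c + 1) * N := by gcongr; omega
    _ ≤ Nat.sqrt (N ^ 3) := Nat.le_sqrt.2 (by nlinarith)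

theorem statement9_general (n p k : ℕ → ℕ) [hp : ∀ i, Fact (p i).Prime]
    (hmono : StrictMono n)
    (hk : ∀ i, 1 ≤ k i)
    (m : ℕ → ℕ) (hm : ∀ i, m i = (p i ^ k i) ^ Nat.sqrt (n i ^ 3)) :
    ¬ HasUBERG (∀ i : ℕ, Fin (m i) →
        Matrix.SpecialLinearGroup (Fin (n i)) (GaloisField (p i) (k i))) := by
  intro hG
  obtain ⟨c, hc⟩ := hG.exists_card_le
  set i := (c + 2) ^ 2
  have hni : (c + 2) ^ 2 ≤ n i := hmono.le_apply
  have hni₁ : (c + 1) ^ 2 ≤ n i := le_trans (Nat.pow_le_pow_left (by omega) 2) hni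
  have hni₂ : 2 ≤ n i := le_trans (le_trans (by omega) (Nat.le_self_pow two_ne_zero _)) hni
  have hki : k i ≠ 0 := Nat.one_le_iff_ne_zero.1 (hk i)
  have : Nontrivial (Fin (n i)) := Fin.nontrivial_iff_two_le.2 hni₂
  let _ : Fintype (GaloisField (p i) (k i)) := Fintype.ofFinite _
  let π := Pi.evalMonoidHom (fun i => Fin (m i) →
    Matrix.SpecialLinearGroup (Fin (n i)) (GaloisField (p i) (k i))) i
  have hπ : Function.Surjective π := Function.surjective_eval i
  have hcard := hc _ (n i) (by omega) (fun j => (slFactorRep _ j).comp π)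
    (fun j => (irredRep_slFactorRep _ j).comp (continuous_apply i) hπ)
    (fun j j' hjj' hrep => not_repEquiv_slFactorRep _ hjj' (hrep.of_comp hπ))
  rw [Fintype.card_fin, Fintype.card_eq_nat_card, GaloisField.card _ _ hki, hm i] at hcard
  exact (Nat.pow_lt_pow_right (Nat.one_lt_pow hki (hp i).out.one_lt)
    (mul_lt_sqrt_pow_three hni₁)).not_ge hcard

theorem statement9 (n p k : ℕ → ℕ) [hp : ∀ i, Fact (p i).Prime]
    (hmono : StrictMono n) (hn12 : ∀ i, 12 ≤ n i)
    (hncop : ∀ i j, i ≠ j → Nat.Coprime (n i) (n j))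
    (hp5 : ∀ i, 5 ≤ p i) (hpdist : Function.Injective p)
    (hk : ∀ i, 1 ≤ k i)
    (hgcd : ∀ i, 1 < Nat.gcd (n i) (p i ^ k i - 1))
    (m : ℕ → ℕ) (hm : ∀ i, m i = (p i ^ k i) ^ Nat.sqrt (n i ^ 3)) :
    ¬ HasUBERG (∀ i : ℕ, Fin (m i) →
        Matrix.SpecialLinearGroup (Fin (n i)) (GaloisField (p i) (k i))) :=
  statement9_general n p k (hp := hp) hmono hk m hm
end

section
/- Let p ≥ 3 be an odd prime. There exists a simple module V over the group algebra 𝔽₂[SL₂(𝔽_p)] such that dim_{𝔽₂}(V) ≤ p, the first group cohomology H¹(SL₂(𝔽_p), V) is nonzero, and the centre of SL₂(𝔽_p) acts trivially on V. -/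
/-!
`SL₂(𝔽_p)` acts transitively on the `p + 1` points of `ℙ¹(𝔽_p)`, and its centre acts trivially.
Let `S` be the augmentation kernel (functions with sum zero) of the permutation module `𝔽₂^ℙ¹`;
it has dimension `p`. For a point `x`, `g ↦ g·δₓ - δₓ` is a cocycle with values in `S`. If it were
a coboundary `g ↦ g·v - v` with `v ∈ S`, then `δₓ - v` would be invariant, hence constant, so
its sum would be both `1` and a multiple of `p + 1 = 0` in `𝔽₂`.

A nonzero class in `H¹` passes to a simple subquotient: for an invariant subspace `W`, either its
image in `H¹(V ⧸ W)` is nonzero, or the cocycle can be changed by a coboundary to take values in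
`W`, where it is not a coboundary.
-/

open Module

namespace Representation

variable {k G V W : Type*} [CommRing k] [Group G] [AddCommGroup V] [Module k V]
  [AddCommGroup W] [Module k W]

def IsCocycle (ρ : Representation k G V) (f : G → V) : Prop :=
  ∀ g h, f (g * h) = f g + ρ g (f h)

def IsCoboundary (ρ : Representation k G V) (f : G → V) : Prop :=
  ∃ v, ∀ g, f g = ρ g v - v

def HasNonzeroH1 (ρ : Representation k G V) : Prop :=
  ∃ f, IsCocycle ρ f ∧ ¬ IsCoboundary ρ f

def HasNoProperInvariantSubmodule (ρ : Representation k G V) : Prop :=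
  ∀ W : Submodule k V, (∀ g, ∀ v ∈ W, ρ g v ∈ W) → W = ⊥ ∨ W = ⊤

theorem IsCocycle.quotient {ρ : Representation k G V} {f : G → V} (hf : IsCocycle ρ f)
    (W : Submodule k V) (hW : ∀ g, W ≤ W.comap (ρ g)) :
    IsCocycle (ρ.quotient W hW) (fun g => W.mkQ (f g)) := by
  intro g h
  simp [hf g h]

theorem IsCocycle.sub_coboundary {ρ : Representation k G V} {f : G → V} (hf : IsCocycle ρ f)
    (v : V) : IsCocycle ρ (fun g => f g - (ρ g v - v)) := by
  intro g h
  simp only [hf g h, map_mul, Module.End.mul_apply, map_sub]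
  abel

theorem hasNonzeroH1_subrepresentation_or_quotient {ρ : Representation k G V}
    (h : HasNonzeroH1 ρ) (W : Submodule k V) (hW : ∀ g, W ≤ W.comap (ρ g)) :
    HasNonzeroH1 (ρ.subrepresentation W hW) ∨ HasNonzeroH1 (ρ.quotient W hW) := by
  obtain ⟨f, hf, hnf⟩ := h
  by_cases hq : IsCoboundary (ρ.quotient W hW) (fun g => W.mkQ (f g))
  · obtain ⟨v', hv'⟩ := hq
    obtain ⟨v, rfl⟩ := W.mkQ_surjective v'
    have hmem : ∀ g, f g - (ρ g v - v) ∈ W := fun g => by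
      rw [← Submodule.Quotient.mk_eq_zero, Submodule.Quotient.mk_sub]
      simpa [sub_eq_zero] using hv' g
    refine .inl ⟨fun g => ⟨_, hmem g⟩, fun g h => Subtype.ext (hf.sub_coboundary v g h), ?_⟩
    rintro ⟨w, hw⟩
    refine hnf ⟨v + w, fun g => ?_⟩
    have := congrArg Subtype.val (hw g)
    simp only [AddSubgroupClass.coe_sub, subrepresentation_apply,
      LinearMap.coe_restrict_apply] at this
    rw [map_add, ← sub_eq_zero, ← sub_eq_zero.mpr this]
    abel
  · exact .inr ⟨_, hf.quotient W hW, hq⟩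

def transport (ρ : Representation k G V) (e : V ≃ₗ[k] W) : Representation k G W :=
  (e.conjAlgEquiv k).toMonoidHom.comp ρ

@[simp]
theorem transport_apply (ρ : Representation k G V) (e : V ≃ₗ[k] W) (g : G) (w : W) :
    ρ.transport e g w = e (ρ g (e.symm w)) :=
  rfl

theorem HasNonzeroH1.transport {ρ : Representation k G V} (h : HasNonzeroH1 ρ)
    (e : V ≃ₗ[k] W) : HasNonzeroH1 (ρ.transport e) := by
  obtain ⟨f, hf, hnf⟩ := h
  refine ⟨fun g => e (f g), fun g h => by simp [hf g h], ?_⟩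
  rintro ⟨w, hw⟩
  exact hnf ⟨e.symm w, fun g => e.injective (by simpa using hw g)⟩

theorem HasNoProperInvariantSubmodule.transport {ρ : Representation k G V}
    (h : HasNoProperInvariantSubmodule ρ) (e : V ≃ₗ[k] W) :
    HasNoProperInvariantSubmodule (ρ.transport e) := by
  intro U hU
  have hUe : ∀ g, ∀ v ∈ U.comap e.toLinearMap, ρ g v ∈ U.comap e.toLinearMap :=
    fun g v hv => by simpa using hU g (e v) hv
  simpa [Submodule.comap_equiv_eq_map_symm] using h _ hUe

theorem HasNonzeroH1.nontrivial {ρ : Representation k G V} (h : HasNonzeroH1 ρ) :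
    Nontrivial V := by
  obtain ⟨f, -, hnf⟩ := h
  by_contra hV
  rw [not_nontrivial_iff_subsingleton] at hV
  exact hnf ⟨0, fun g => Subsingleton.elim _ _⟩

theorem exists_fin_hasNoProperInvariantSubmodule_hasNonzeroH1 {k G V : Type*} [Field k]
    [Group G] [AddCommGroup V] [Module k V] [FiniteDimensional k V] (ρ : Representation k G V)
    (N : Subgroup G) (hN : ∀ z ∈ N, ∀ v, ρ z v = v) (h : HasNonzeroH1 ρ) :
    ∃ (d : ℕ) (σ : Representation k G (Fin d → k)), 1 ≤ d ∧ d ≤ finrank k V ∧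
      HasNoProperInvariantSubmodule σ ∧ HasNonzeroH1 σ ∧ ∀ z ∈ N, ∀ v, σ z v = v := by
  induction hn : finrank k V using Nat.strong_induction_on generalizing V with
  | _ n ih =>
  subst hn
  by_cases hsimple : HasNoProperInvariantSubmodule ρ
  · have := h.nontrivial
    let e := (finBasis k V).equivFun
    exact ⟨_, ρ.transport e, finrank_pos, le_rfl, hsimple.transport e, h.transport e,
      fun z hz v => by simp [hN z hz]⟩
  · obtain ⟨W, hW, hne⟩ : ∃ W : Submodule k V, (∀ g, ∀ v ∈ W, ρ g v ∈ W) ∧ W ≠ ⊥ ∧ W ≠ ⊤ := by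
      simpa only [HasNoProperInvariantSubmodule, not_forall, not_or, exists_prop] using hsimple
    have hWlt : finrank k W < finrank k V := Submodule.finrank_lt hne.2
    have hQlt : finrank k (V ⧸ W) < finrank k V := by
      have := Submodule.nontrivial_iff_ne_bot.mpr hne.1
      have := W.finrank_quotient_add_finrank
      have : 0 < finrank k W := finrank_pos
      omega
    rcases hasNonzeroH1_subrepresentation_or_quotient h W hW with hsub | hquot
    · obtain ⟨d, σ, hd, hdW, hσ⟩ := ih _ hWlt _ (fun z hz v => Subtype.ext (hN z hz v)) hsub rfl
      exact ⟨d, σ, hd, hdW.trans hWlt.le, hσ⟩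
    · obtain ⟨d, σ, hd, hdQ, hσ⟩ := ih _ hQlt _
        (fun z hz => W.mkQ_surjective.forall.mpr fun v => by simp [hN z hz]) hquot rfl
      exact ⟨d, σ, hd, hdQ.trans hQlt.le, hσ⟩

section Permutation

variable (k G X : Type*) [CommRing k] [Group G] [MulAction G X]

def ofMulActionFun : Representation k G (X → k) where
  toFun g := LinearMap.funLeft k k (g⁻¹ • ·)
  map_one' := by ext; simp [LinearMap.funLeft_apply]
  map_mul' g h := by ext; simp [LinearMap.funLeft_apply, mul_smul]

variable {k G X}

@[simp]
theorem ofMulActionFun_apply (g : G) (v : X → k) (x : X) :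
    ofMulActionFun k G X g v x = v (g⁻¹ • x) :=
  rfl

theorem eq_of_forall_ofMulActionFun_apply_eq [MulAction.IsPretransitive G X] {v : X → k}
    (hv : ∀ g, ofMulActionFun k G X g v = v) (x y : X) : v x = v y := by
  obtain ⟨g, rfl⟩ := MulAction.exists_smul_eq G x y
  simpa using (congrFun (hv g⁻¹) x).symm

theorem ofMulActionFun_apply_eq_self {g : G} (hg : ∀ x : X, g • x = x) (v : X → k) :
    ofMulActionFun k G X g v = v :=
  funext fun x => by rw [ofMulActionFun_apply, inv_smul_eq_iff.mpr (hg x).symm]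

variable (k X) [Fintype X]

def augmentationKer : Submodule k (X → k) :=
  LinearMap.ker (∑ x : X, LinearMap.proj x)

variable {k X}

theorem mem_augmentationKer {v : X → k} : v ∈ augmentationKer k X ↔ ∑ x, v x = 0 := by
  simp [augmentationKer]

theorem sum_ofMulActionFun_apply (g : G) (v : X → k) :
    ∑ x, ofMulActionFun k G X g v x = ∑ x, v x :=
  Equiv.sum_comp (MulAction.toPerm g⁻¹) v

variable (G) in
theorem augmentationKer_le_comap (g : G) :
    augmentationKer k X ≤ (augmentationKer k X).comap (ofMulActionFun k G X g) := by
  intro v hv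
  rwa [Submodule.mem_comap, mem_augmentationKer, sum_ofMulActionFun_apply, ← mem_augmentationKer]

theorem hasNonzeroH1_augmentationKer [Nontrivial k] [MulAction.IsPretransitive G X] [Nonempty X]
    (hX : (Fintype.card X : k) = 0) :
    HasNonzeroH1 ((ofMulActionFun k G X).subrepresentation _ (augmentationKer_le_comap G)) := by
  classical
  set x₀ := Classical.arbitrary X
  set e : X → k := Pi.single x₀ 1
  have he : ∑ x, e x = 1 := by simp [e]
  have hmem (g : G) : ofMulActionFun k G X g e - e ∈ augmentationKer k X := by
    rw [mem_augmentationKer]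
    simp only [Pi.sub_apply, Finset.sum_sub_distrib, sum_ofMulActionFun_apply, sub_self]
  refine ⟨fun g => ⟨_, hmem g⟩, fun g h => Subtype.ext ?_, ?_⟩
  · simp only [map_mul, Module.End.mul_apply, subrepresentation_apply,
      LinearMap.coe_restrict_apply, map_sub, Submodule.coe_add]
    abel
  · rintro ⟨⟨v, hv⟩, hcob⟩
    have hfix (g : G) : ofMulActionFun k G X g (e - v) = e - v := by
      have := congrArg Subtype.val (hcob g)
      simp only [AddSubgroupClass.coe_sub, subrepresentation_apply,
        LinearMap.coe_restrict_apply] at this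
      rwa [map_sub, sub_eq_sub_iff_sub_eq_sub]
    have hconst := eq_of_forall_ofMulActionFun_apply_eq hfix
    have : ∑ x, (e - v) x = 0 := by
      simp_rw [hconst _ x₀]
      simp [hX]
    simp [Finset.sum_sub_distrib, he, mem_augmentationKer.mp hv] at this

end Permutation

theorem finrank_augmentationKer_lt {k X : Type*} [Field k] [Fintype X] [Nonempty X] :
    finrank k (augmentationKer k X) < Fintype.card X := by
  classical
  rw [← Module.finrank_fintype_fun_eq_card k]
  refine Submodule.finrank_lt fun htop => ?_
  have : Pi.single (Classical.arbitrary X) 1 ∈ augmentationKer k X := htop ▸ Submodule.mem_top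
  simp [mem_augmentationKer] at this

end Representation

open Representation

theorem Projectivization.smul_eq_self_of_mem_center {K ι : Type*} [Field K] [Fintype ι]
    [DecidableEq ι] {z : Matrix.SpecialLinearGroup ι K} (hz : z ∈ Subgroup.center _)
    (x : Projectivization K (ι → K)) : z • x = x := by
  rw [← Projectivization.SL_mulAction_ker, MonoidHom.mem_ker] at hz
  exact congrArg (· x) hz

theorem statement14_general (p : ℕ) (hp : p.Prime) (hodd : Odd p) :
    ∃ (d : ℕ) (ρ : Representation (ZMod 2) (Matrix.SpecialLinearGroup (Fin 2) (ZMod p))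
        (Fin d → ZMod 2)),
      1 ≤ d ∧ d ≤ p ∧
      (∀ W : Submodule (ZMod 2) (Fin d → ZMod 2),
        (∀ g : Matrix.SpecialLinearGroup (Fin 2) (ZMod p), ∀ v ∈ W, ρ g v ∈ W) →
        W = ⊥ ∨ W = ⊤) ∧
      (∃ f : Matrix.SpecialLinearGroup (Fin 2) (ZMod p) → (Fin d → ZMod 2),
        (∀ g h, f (g * h) = f g + ρ g (f h)) ∧
        ¬ ∃ v : Fin d → ZMod 2, ∀ g, f g = ρ g v - v) ∧
      (∀ z ∈ Subgroup.center (Matrix.SpecialLinearGroup (Fin 2) (ZMod p)),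
        ∀ v : Fin d → ZMod 2, ρ z v = v) := by
  have : Fact p.Prime := ⟨hp⟩
  let X := Projectivization (ZMod p) (Fin 2 → ZMod p)
  let := Fintype.ofFinite X
  have hcard : Fintype.card X = p + 1 := by
    rw [← Nat.card_eq_fintype_card, Projectivization.card_of_finrank_two _ _ (by simp),
      Nat.card_zmod]
  have hH1 := hasNonzeroH1_augmentationKer (k := ZMod 2)
    (G := Matrix.SpecialLinearGroup (Fin 2) (ZMod p)) (X := X)
    (by rw [hcard, ZMod.natCast_eq_zero_iff_even]; exact hodd.add_one)
  obtain ⟨d, σ, hd, hdX, hσ⟩ := exists_fin_hasNoProperInvariantSubmodule_hasNonzeroH1 _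
    (Subgroup.center _) (fun z hz v => Subtype.ext <|
      ofMulActionFun_apply_eq_self (Projectivization.smul_eq_self_of_mem_center hz) _) hH1
  have := finrank_augmentationKer_lt (k := ZMod 2) (X := X)
  exact ⟨d, σ, hd, by omega, hσ⟩

theorem statement14 (p : ℕ) (hp : p.Prime) (hodd : Odd p) (hp3 : 3 ≤ p) :
    ∃ (d : ℕ) (ρ : Representation (ZMod 2) (Matrix.SpecialLinearGroup (Fin 2) (ZMod p))
        (Fin d → ZMod 2)),
      1 ≤ d ∧ d ≤ p ∧
      (∀ W : Submodule (ZMod 2) (Fin d → ZMod 2),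
        (∀ g : Matrix.SpecialLinearGroup (Fin 2) (ZMod p), ∀ v ∈ W, ρ g v ∈ W) →
        W = ⊥ ∨ W = ⊤) ∧
      (∃ f : Matrix.SpecialLinearGroup (Fin 2) (ZMod p) → (Fin d → ZMod 2),
        (∀ g h, f (g * h) = f g + ρ g (f h)) ∧
        ¬ ∃ v : Fin d → ZMod 2, ∀ g, f g = ρ g v - v) ∧
      (∀ z ∈ Subgroup.center (Matrix.SpecialLinearGroup (Fin 2) (ZMod p)),
        ∀ v : Fin d → ZMod 2, ρ z v = v) :=
  statement14_general p hp hodd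
end

section
/- Let G be a group, let A be an abelian group equipped with an action of G by automorphisms, and let G̃ = A ⋊ G be the corresponding semidirect product. Let M be a G-module, regarded as a G̃-module via the projection G̃ → G (so A acts trivially on M). Then the sequence 0 → H¹(G,M) → H¹(G̃,M) → Hom_G(A,M) → 0 is exact, where the first map is inflation along the projection G̃ → G, and the second map sends the class of a 1-cocycle f : G̃ → M to the G-equivariant homomorphism A → M obtained by restricting f to A. -/
section

variable (G : Type*) [Group G] (M : Type*) [AddCommGroup M] [DistribMulAction G M]

/-- A 1-cocycle on `G` with values in the `G`-module `M`. -/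
def IsCocycle (f : G → M) : Prop :=
  ∀ g h : G, f (g * h) = f g + g • f h

/-- A 1-coboundary on `G` with values in the `G`-module `M`. -/
def IsCoboundary (f : G → M) : Prop :=
  ∃ m : M, ∀ g : G, f g = g • m - m

end

open SemidirectProduct in
theorem statement19 (G : Type*) [Group G] (A : Type*) [CommGroup A]
    (ρA : G →* MulAut A) (M : Type*) [AddCommGroup M] [DistribMulAction G M] :
    -- the restriction of a 1-cocycle on `A ⋊ G` to `A` is a group homomorphism ...
    (∀ F : A ⋊[ρA] G → M,
      (∀ x y : A ⋊[ρA] G, F (x * y) = F x + x.right • F y) →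
      ∀ a b : A, F (inl (a * b)) = F (inl a) + F (inl b)) ∧
    -- ... and it is `G`-equivariant;
    (∀ F : A ⋊[ρA] G → M,
      (∀ x y : A ⋊[ρA] G, F (x * y) = F x + x.right • F y) →
      ∀ (g : G) (a : A), F (inl (ρA g a)) = g • F (inl a)) ∧
    -- exactness at `H¹(G,M)`: inflation is injective;
    (∀ f : G → M, IsCocycle G M f →
      (∃ m : M, ∀ x : A ⋊[ρA] G, f x.right = x.right • m - m) →
      IsCoboundary G M f) ∧
    -- exactness at `H¹(G̃,M)`: the class of a cocycle `F` restricts to the zero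
    -- homomorphism on `A` iff `F` is an inflated cocycle up to a coboundary;
    (∀ F : A ⋊[ρA] G → M,
      (∀ x y : A ⋊[ρA] G, F (x * y) = F x + x.right • F y) →
      ((∀ a : A, F (inl a) = 0) ↔
        ∃ f : G → M, IsCocycle G M f ∧
          ∃ m : M, ∀ x : A ⋊[ρA] G, F x = f x.right + (x.right • m - m))) ∧
    -- exactness at `Hom_G(A,M)`: restriction is surjective.
    (∀ φ : A → M, (∀ a b : A, φ (a * b) = φ a + φ b) →
      (∀ (g : G) (a : A), φ (ρA g a) = g • φ a) →
      ∃ F : A ⋊[ρA] G → M,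
        (∀ x y : A ⋊[ρA] G, F (x * y) = F x + x.right • F y) ∧
        ∀ a : A, F (inl a) = φ a) := by
  refine ⟨?_, ?_, ?_, ?_, ?_⟩
  · intro F hF a b
    have := hF (inl a) (inl b)
    simpa [right_inl] using this
  · intro F hF g a
    have h1 := hF (inr g) (inl a)
    have h2 := hF (inl (ρA g a)) (inr g)
    have he : (inr g : A ⋊[ρA] G) * inl a = inl (ρA g a) * inr g := by
      ext <;> simp [mul_left, mul_right]
    rw [he, h2] at h1
    simp only [right_inl, right_inr, one_smul] at h1 h2 ⊢
    linear_combination (norm := abel) h1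
  · intro f hf ⟨m, hm⟩
    exact ⟨m, fun g => by simpa using hm (inr g)⟩
  · intro F hF
    constructor
    · intro hA
      refine ⟨fun g => F (inr g), fun g h => by simpa [right_inr] using hF (inr g) (inr h), 0, fun x => ?_⟩
      have := hF (inl x.left) (inr x.right)
      rw [inl_left_mul_inr_right] at this
      simp [this, hA, right_inl]
    · rintro ⟨f, hf, m, hm⟩ a
      have hf1 : f 1 = 0 := by
        have := hf 1 1
        simp only [mul_one, one_smul] at this
        have h0 : f 1 + f 1 - f 1 = f 1 + f 1 - (f 1 + f 1) := by rw [← this]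
        simpa using h0
      have := hm (inl a)
      simp [right_inl, hf1] at this
      exact this
  · intro φ hadd hequiv
    refine ⟨fun x => φ x.left, fun x y => ?_, fun a => by simp [left_inl]⟩
    simp [mul_left, hadd, hequiv]
end
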